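/- In the superstar Plackett–Luce model, for any ranks i < j, the ratio P[σ^i]/P[σ^j] = ∏_{k=i}^{j−1} (1 + (e^{(v₁−v₂)/β} − 1)/(n − k)). In particular P[σ^i] ≥ P[σ^j] for i < j, and each such ratio is strictly increasing as β decreases (accuracy increases) when v₁ > v₂. -/

import Mathlib

open Finset

/-- Closed-form probability that the high-value item is ranked at (1-indexed)
position `i` in the superstar Plackett–Luce model with `n` items, values
`v₁ > v₂`, and Gumbel noise scale `β`. -/
noncomputable def superstarP (v₁ v₂ β : ℝ) (n i : ℕ) : ℝ :=
  Real.exp ((v₁ - v₂) / β) / (Real.exp ((v₁ - v₂) / β) + (n - 1)) *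
    ∏ k ∈ Finset.range (i - 1),
      1 / (1 + (Real.exp ((v₁ - v₂) / β) - 1) / ((n : ℝ) - (k + 1)))

/-!
Writing `E = e^{(v₁−v₂)/β}`, the closed form is `P[σ^i] = c · (∏_{1 ≤ k < i} f_k)⁻¹`
with `f_k = 1 + (E − 1)/(n − k)`, so the ratio `P[σ^i]/P[σ^j]` telescopes to
`∏_{i ≤ k < j} f_k`. Each `f_k` is at least `1` once `E ≥ 1`, and strictly increasing
in `E`, which grows as `β` decreases.
-/

noncomputable def superstarFactor (E : ℝ) (n k : ℕ) : ℝ :=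
  1 + (E - 1) / ((n : ℝ) - k)

section superstarFactor

variable {E : ℝ} {n k : ℕ}

lemma superstarFactor_pos (hE : 0 < E) (hk : k < n) : 0 < superstarFactor E n k := by
  have hm : (1 : ℝ) ≤ n - k := by
    rw [le_sub_iff_add_le']
    exact_mod_cast hk
  rw [superstarFactor, one_add_div (by linarith)]
  exact div_pos (by linarith) (by linarith)

lemma one_le_superstarFactor (hE : 1 ≤ E) (hk : k ≤ n) : 1 ≤ superstarFactor E n k := by
  have hm : (0 : ℝ) ≤ n - k := sub_nonneg.2 (by exact_mod_cast hk)
  exact le_add_of_nonneg_right (div_nonneg (sub_nonneg.2 hE) hm)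

lemma strictMono_superstarFactor (hk : k < n) : StrictMono fun E => superstarFactor E n k := by
  have hm : (0 : ℝ) < n - k := sub_pos.2 (by exact_mod_cast hk)
  intro E E' hEE'
  simpa [superstarFactor] using div_lt_div_of_pos_right (sub_lt_sub_right hEE' 1) hm

end superstarFactor

section superstarP

variable {v₁ v₂ β : ℝ} {n i j : ℕ}

lemma superstarP_eq :
    superstarP v₁ v₂ β n i =
      Real.exp ((v₁ - v₂) / β) / (Real.exp ((v₁ - v₂) / β) + (n - 1)) *
        (∏ k ∈ Ico 1 i, superstarFactor (Real.exp ((v₁ - v₂) / β)) n k)⁻¹ := by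
  rw [superstarP, prod_Ico_eq_prod_range, ← prod_inv_distrib]
  simp only [one_div, superstarFactor, Nat.cast_add, Nat.cast_one, add_comm (1 : ℝ)]

lemma superstarP_pos (hi : 1 ≤ i) (hin : i ≤ n) : 0 < superstarP v₁ v₂ β n i := by
  have hn : (1 : ℝ) ≤ n := by exact_mod_cast hi.trans hin
  have hE := Real.exp_pos ((v₁ - v₂) / β)
  rw [superstarP_eq]
  refine mul_pos (div_pos hE (by linarith)) (inv_pos.2 (prod_pos fun k hk => ?_))
  exact superstarFactor_pos hE ((mem_Ico.1 hk).2.trans_le hin)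

lemma superstarP_div_superstarP (hi : 1 ≤ i) (hij : i ≤ j) (hj : j ≤ n) :
    superstarP v₁ v₂ β n i / superstarP v₁ v₂ β n j =
      ∏ k ∈ Ico i j, superstarFactor (Real.exp ((v₁ - v₂) / β)) n k := by
  have hn : (1 : ℝ) ≤ n := by exact_mod_cast (hi.trans hij).trans hj
  have hE := Real.exp_pos ((v₁ - v₂) / β)
  have hf : ∀ a b, b ≤ n →
      0 < ∏ k ∈ Ico a b, superstarFactor (Real.exp ((v₁ - v₂) / β)) n k :=
    fun a b hb => prod_pos fun k hk => superstarFactor_pos hE ((mem_Ico.1 hk).2.trans_le hb)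
  have hc : Real.exp ((v₁ - v₂) / β) + (n - 1) ≠ 0 := by linarith
  have hA := hf 1 i (hij.trans hj)
  have hB := hf i j hj
  rw [superstarP_eq, superstarP_eq, ← prod_Ico_consecutive _ hi hij]
  field_simp

lemma superstarP_le_superstarP (hv : v₂ ≤ v₁) (hβ : 0 ≤ β) (hi : 1 ≤ i) (hij : i ≤ j)
    (hj : j ≤ n) : superstarP v₁ v₂ β n j ≤ superstarP v₁ v₂ β n i := by
  have hE : 1 ≤ Real.exp ((v₁ - v₂) / β) :=
    Real.one_le_exp (div_nonneg (sub_nonneg.2 hv) hβ)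
  rw [← one_le_div (superstarP_pos (hi.trans hij) hj), superstarP_div_superstarP hi hij hj]
  exact one_le_prod fun k hk => one_le_superstarFactor hE ((mem_Ico.1 hk).2.le.trans hj)

lemma superstarP_div_superstarP_lt_of_lt {β' : ℝ} (hβ' : 0 < β') (hβ'β : β' < β)
    (hv : v₂ < v₁) (hi : 1 ≤ i) (hij : i < j) (hj : j ≤ n) :
    superstarP v₁ v₂ β n i / superstarP v₁ v₂ β n j <
      superstarP v₁ v₂ β' n i / superstarP v₁ v₂ β' n j := by
  have hEE' : Real.exp ((v₁ - v₂) / β) < Real.exp ((v₁ - v₂) / β') :=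
    Real.exp_lt_exp.2 (div_lt_div_of_pos_left (sub_pos.2 hv) hβ' hβ'β)
  rw [superstarP_div_superstarP hi hij.le hj, superstarP_div_superstarP hi hij.le hj]
  refine prod_lt_prod_of_nonempty (fun k hk => ?_) (fun k hk => ?_) (nonempty_Ico.2 hij)
  · exact superstarFactor_pos (Real.exp_pos _) ((mem_Ico.1 hk).2.trans_le hj)
  · exact strictMono_superstarFactor ((mem_Ico.1 hk).2.trans_le hj) hEE'

end superstarP

theorem stmt3_general
    (n i j : ℕ) (v₁ v₂ β β' : ℝ)
    (hβ' : 0 < β') (hβ'β : β' < β) (hv : v₂ < v₁)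
    (hi : 1 ≤ i) (hij : i < j) (hj : j ≤ n) :
    superstarP v₁ v₂ β n i / superstarP v₁ v₂ β n j =
        ∏ k ∈ Finset.Ico i j,
          (1 + (Real.exp ((v₁ - v₂) / β) - 1) / ((n : ℝ) - k)) ∧
      superstarP v₁ v₂ β n j ≤ superstarP v₁ v₂ β n i ∧
      superstarP v₁ v₂ β n i / superstarP v₁ v₂ β n j <
        superstarP v₁ v₂ β' n i / superstarP v₁ v₂ β' n j :=
  ⟨superstarP_div_superstarP hi hij.le hj,
    superstarP_le_superstarP hv.le (hβ'.trans hβ'β).le hi hij.le hj,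
    superstarP_div_superstarP_lt_of_lt hβ' hβ'β hv hi hij hj⟩

/-- In the superstar Plackett–Luce model, for ranks `i < j`,
`P[σ^i]/P[σ^j] = ∏_{k=i}^{j−1} (1 + (e^{(v₁−v₂)/β} − 1)/(n − k))`; in
particular `P[σ^i] ≥ P[σ^j]`, and the ratio is strictly increasing as `β`
decreases (accuracy increases) when `v₁ > v₂`. -/
theorem stmt3
    (n i j : ℕ) (v₁ v₂ β β' : ℝ)
    (hβ : 0 < β) (hβ' : 0 < β') (hβ'β : β' < β) (hv : v₂ < v₁)
    (hi : 1 ≤ i) (hij : i < j) (hj : j ≤ n) :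
    superstarP v₁ v₂ β n i / superstarP v₁ v₂ β n j =
        ∏ k ∈ Finset.Ico i j,
          (1 + (Real.exp ((v₁ - v₂) / β) - 1) / ((n : ℝ) - k)) ∧
      superstarP v₁ v₂ β n j ≤ superstarP v₁ v₂ β n i ∧
      superstarP v₁ v₂ β n i / superstarP v₁ v₂ β n j <
        superstarP v₁ v₂ β' n i / superstarP v₁ v₂ β' n j :=
  stmt3_general n i j v₁ v₂ β β' hβ' hβ'β hv hi hij hj
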